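/- arXiv:1612.05356 — 3 statements merged into one kernel-verified Lean document; each statement's English description precedes it below -/
import Mathlib

section
/- Let W = {x ∈ ℝ^d : Cx ≤ c} be a nonempty compact polyhedron, g : ℝ^n → ℝ differentiable and μ-strongly convex with μ > 0, F(x) = g(Ax) + qᵀx, and W* the (nonempty) set of minimizers of F over W. Suppose there is a constant θ > 0 such that for every x ∈ W, dist(x, W*) ≤ θ‖Ax − r‖, where r is the common value Ax* for x* ∈ W* (Hoffman bound). Then with β = θ², for every x ∈ W and x* = proj_{W*}(x): F(x) − F(x*) ≥ (μ/(2β))‖x − x*‖². -/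
/-!
The first-order optimality condition of `P x` on the convex set `W` kills the linear term in the
strong convexity inequality of `g` between `A x` and `A (P x) = r`, so
`F x - F (P x) ≥ μ / 2 * ‖A x - r‖ ^ 2`; the Hoffman bound then converts `‖A x - r‖ ^ 2`
into `‖x - P x‖ ^ 2 / θ ^ 2`.
-/

open RealInnerProductSpace

theorem convex_setOf_forall_inner_le {E ι : Type*} [NormedAddCommGroup E] [InnerProductSpace ℝ E]
    (C : ι → E) (c : ι → ℝ) : Convex ℝ {x | ∀ i, ⟪C i, x⟫ ≤ c i} := by
  rw [Set.ofPred_forall]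
  exact convex_iInter fun i ↦ convex_halfSpace_le (innerₛₗ ℝ (C i)).isLinear (c i)

theorem IsMinOn.hasFDerivAt_sub_nonneg {E : Type*} [NormedAddCommGroup E] [NormedSpace ℝ E]
    {f : E → ℝ} {f' : E →L[ℝ] ℝ} {s : Set E} {a x : E} (h : IsMinOn f s a) (hs : Convex ℝ s)
    (ha : a ∈ s) (hx : x ∈ s) (hf : HasFDerivAt f f' a) : 0 ≤ f' (x - a) :=
  h.localize.hasFDerivWithinAt_nonneg hf.hasFDerivWithinAt
    (sub_mem_posTangentConeAt_of_segment_subset (hs.segment_subset ha hx))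

theorem sq_div_sq_le_sq_of_le_mul {a b θ : ℝ} (ha : 0 ≤ a) (h : a ≤ θ * b) :
    a ^ 2 / θ ^ 2 ≤ b ^ 2 :=
  div_le_of_le_mul₀ (sq_nonneg θ) (sq_nonneg b) <| by
    simpa only [mul_pow, mul_comm] using pow_le_pow_left₀ ha h 2

section CompositeObjective

variable {E G : Type*} [NormedAddCommGroup E] [InnerProductSpace ℝ E]
  [NormedAddCommGroup G] [InnerProductSpace ℝ G] [CompleteSpace G]
  {g : G → ℝ} {g' : G → G} {μ : ℝ} {A : E →L[ℝ] G} {q : E} {F : E → ℝ}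

theorem hasFDerivAt_comp_add_inner {p : E} (hgrad : HasGradientAt g (g' (A p)) (A p))
    (hF : ∀ x, F x = g (A x) + ⟪q, x⟫) :
    HasFDerivAt F ((InnerProductSpace.toDual ℝ G (g' (A p))).comp A + innerSL ℝ q) p := by
  rw [show F = fun x ↦ g (A x) + ⟪q, x⟫ from funext hF]
  exact (hgrad.hasFDerivAt.comp p A.hasFDerivAt).add (innerSL ℝ q).hasFDerivAt

theorem sq_norm_sub_le_sub_of_isMinOn (hgrad : ∀ z, HasGradientAt g (g' z) z)
    (hsc : ∀ z₁ z₂, g z₁ ≥ g z₂ + ⟪g' z₂, z₁ - z₂⟫ + (μ / 2) * ‖z₁ - z₂‖ ^ 2)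
    (hF : ∀ x, F x = g (A x) + ⟪q, x⟫) {s : Set E} {p x : E} (hs : Convex ℝ s)
    (hp : p ∈ s) (hmin : IsMinOn F s p) (hx : x ∈ s) :
    μ / 2 * ‖A x - A p‖ ^ 2 ≤ F x - F p := by
  have hopt : 0 ≤ ⟪g' (A p), A (x - p)⟫ + ⟪q, x - p⟫ := by
    simpa only [add_apply, ContinuousLinearMap.coe_comp, Function.comp_apply,
      InnerProductSpace.toDual_apply_apply, innerSL_apply_apply] using
      hmin.hasFDerivAt_sub_nonneg hs hp hx (hasFDerivAt_comp_add_inner (hgrad _) hF)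
  have hsc' := hsc (A x) (A p)
  rw [map_sub, inner_sub_right, inner_sub_right] at hopt
  rw [inner_sub_right] at hsc'
  rw [hF x, hF p]
  linarith

end CompositeObjective

theorem stmt_9_general {d n m : ℕ}
    (C : Fin m → EuclideanSpace ℝ (Fin d)) (c : Fin m → ℝ)
    (W : Set (EuclideanSpace ℝ (Fin d)))
    (hWdef : W = {x | ∀ i, ⟪C i, x⟫ ≤ c i})
    (g : EuclideanSpace ℝ (Fin n) → ℝ)
    (g' : EuclideanSpace ℝ (Fin n) → EuclideanSpace ℝ (Fin n))
    (hgrad : ∀ z, HasGradientAt g (g' z) z)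
    (μ : ℝ) (hμ : 0 < μ)
    (hsc : ∀ z₁ z₂, g z₁ ≥ g z₂ + ⟪g' z₂, z₁ - z₂⟫ + (μ / 2) * ‖z₁ - z₂‖ ^ 2)
    (A : EuclideanSpace ℝ (Fin d) →ₗ[ℝ] EuclideanSpace ℝ (Fin n))
    (q : EuclideanSpace ℝ (Fin d))
    (F : EuclideanSpace ℝ (Fin d) → ℝ)
    (hF : ∀ x, F x = g (A x) + ⟪q, x⟫)
    (Wstar : Set (EuclideanSpace ℝ (Fin d)))
    (hWstar : Wstar = {x | x ∈ W ∧ ∀ w ∈ W, F x ≤ F w})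
    (r : EuclideanSpace ℝ (Fin n)) (hr : ∀ x ∈ Wstar, A x = r)
    (P : EuclideanSpace ℝ (Fin d) → EuclideanSpace ℝ (Fin d))
    (hP : ∀ x, P x ∈ Wstar ∧ ∀ w ∈ Wstar, ‖x - P x‖ ≤ ‖x - w‖)
    (θ : ℝ)
    (hhoffman : ∀ x ∈ W, ‖x - P x‖ ≤ θ * ‖A x - r‖)
    (β : ℝ) (hβ : β = θ ^ 2) :
    ∀ x ∈ W, F x - F (P x) ≥ (μ / (2 * β)) * ‖x - P x‖ ^ 2 := by
  intro x hx
  have hPx := (hP x).1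
  obtain ⟨hPW, hPmin⟩ : P x ∈ W ∧ ∀ w ∈ W, F (P x) ≤ F w := by rwa [hWstar] at hPx
  have hgrowth : μ / 2 * ‖A x - r‖ ^ 2 ≤ F x - F (P x) := by
    simpa only [LinearMap.coe_toContinuousLinearMap', hr _ hPx] using
      sq_norm_sub_le_sub_of_isMinOn (A := A.toContinuousLinearMap) hgrad hsc hF
        (hWdef ▸ convex_setOf_forall_inner_le C c) hPW (isMinOn_iff.2 hPmin) hx
  have herror : ‖x - P x‖ ^ 2 / β ≤ ‖A x - r‖ ^ 2 :=
    hβ ▸ sq_div_sq_le_sq_of_le_mul (norm_nonneg _) (hhoffman x hx)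
  calc μ / (2 * β) * ‖x - P x‖ ^ 2 = μ / 2 * (‖x - P x‖ ^ 2 / β) := by ring
    _ ≤ μ / 2 * ‖A x - r‖ ^ 2 := by gcongr
    _ ≤ F x - F (P x) := hgrowth

theorem stmt_9 {d n m : ℕ}
    (C : Fin m → EuclideanSpace ℝ (Fin d)) (c : Fin m → ℝ)
    (W : Set (EuclideanSpace ℝ (Fin d)))
    (hWdef : W = {x | ∀ i, ⟪C i, x⟫ ≤ c i})
    (hWne : W.Nonempty) (hWcpt : IsCompact W)
    (g : EuclideanSpace ℝ (Fin n) → ℝ)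
    (g' : EuclideanSpace ℝ (Fin n) → EuclideanSpace ℝ (Fin n))
    (hgrad : ∀ z, HasGradientAt g (g' z) z)
    (μ : ℝ) (hμ : 0 < μ)
    (hsc : ∀ z₁ z₂, g z₁ ≥ g z₂ + ⟪g' z₂, z₁ - z₂⟫ + (μ / 2) * ‖z₁ - z₂‖ ^ 2)
    (A : EuclideanSpace ℝ (Fin d) →ₗ[ℝ] EuclideanSpace ℝ (Fin n))
    (q : EuclideanSpace ℝ (Fin d))
    (F : EuclideanSpace ℝ (Fin d) → ℝ)
    (hF : ∀ x, F x = g (A x) + ⟪q, x⟫)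
    (Wstar : Set (EuclideanSpace ℝ (Fin d)))
    (hWstar : Wstar = {x | x ∈ W ∧ ∀ w ∈ W, F x ≤ F w})
    (hWstarne : Wstar.Nonempty)
    (r : EuclideanSpace ℝ (Fin n)) (hr : ∀ x ∈ Wstar, A x = r)
    (P : EuclideanSpace ℝ (Fin d) → EuclideanSpace ℝ (Fin d))
    (hP : ∀ x, P x ∈ Wstar ∧ ∀ w ∈ Wstar, ‖x - P x‖ ≤ ‖x - w‖)
    (θ : ℝ) (hθ : 0 < θ)
    (hhoffman : ∀ x ∈ W, ‖x - P x‖ ≤ θ * ‖A x - r‖)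
    (β : ℝ) (hβ : β = θ ^ 2) :
    ∀ x ∈ W, F x - F (P x) ≥ (μ / (2 * β)) * ‖x - P x‖ ^ 2 :=
  stmt_9_general C c W hWdef g g' hgrad μ hμ hsc A q F hF Wstar hWstar r hr P hP θ hhoffman β hβ
end

section
/- Under the setup: f_i convex differentiable with L-Lipschitz gradients, F = (1/n)∑ f_i, W ⊆ ℝ^d closed convex, x* a minimizer of F over W, points y, x ∈ W, A a uniformly random b-subset of {1,…,n}, and G = ∇F(x) + (1/b)∑_{i∈A}(∇f_i(y) − ∇f_i(x)). Then E[‖G − ∇F(y)‖²] ≤ α(b)·4L·[F(y) − F(x*) + F(x) − F(x*)], where α(b) = (n−b)/(b(n−1)). -/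
/-!
Put `ξ i = ∇fᵢ(y) - ∇fᵢ(x)`. Then `G - ∇F(y)` is the deviation of the mean of `ξ` over the random
`b`-subset from the mean `ξ̄` over all of `Fin n`. Since every pair `i ≠ j` lies in equally many
`b`-subsets, sampling without replacement has variance `α(b) · (1/n) ∑ ‖ξ i - ξ̄‖²`, which is at
most `α(b) · (1/n) ∑ ‖ξ i‖²`. Splitting `ξ i` through `∇fᵢ(x*)` costs a factor `2`, and
`(1/n) ∑ ‖∇fᵢ(w) - ∇fᵢ(x*)‖² ≤ 2L (F(w) - F(x*))` for `w ∈ W` follows from the cocoercivity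
of each `∇fᵢ` together with the first-order optimality condition `⟪∇F(x*), w - x*⟫ ≥ 0`.
-/

open RealInnerProductSpace

theorem Nat.choose_mul_mul_sub {n b : ℕ} (hb : 1 ≤ b) :
    n.choose b * b * (n - b) = n * (n - 1) * (n - 2).choose (b - 1) := by
  obtain ⟨k, rfl⟩ : ∃ k, b = k + 1 := ⟨b - 1, by omega⟩
  match n with
  | 0 => simp
  | 1 => simp
  | m + 2 =>
    rw [← Nat.add_one_mul_choose_eq, show m + 2 - (k + 1) = m + 1 - k by omega, mul_assoc,
      ← Nat.choose_mul_succ_eq]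
    simp only [show m + 2 - 1 = m + 1 by omega, Nat.add_sub_cancel]
    ring

lemma norm_sub_sq_le_two_mul {F : Type*} [SeminormedAddCommGroup F] (a b : F) :
    ‖a - b‖ ^ 2 ≤ 2 * (‖a‖ ^ 2 + ‖b‖ ^ 2) :=
  (pow_le_pow_left₀ (norm_nonneg _) (norm_sub_le a b) 2).trans add_sq_le

noncomputable def samplingFactor (n b : ℕ) : ℝ := ((n : ℝ) - b) / (b * ((n : ℝ) - 1))

lemma samplingFactor_nonneg {n b : ℕ} (hb : 1 ≤ b) (hbn : b ≤ n) : 0 ≤ samplingFactor n b := by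
  have hbn' : (b : ℝ) ≤ n := by exact_mod_cast hbn
  have hb' : (1 : ℝ) ≤ b := by exact_mod_cast hb
  unfold samplingFactor
  apply div_nonneg <;> nlinarith

lemma samplingFactor_div_eq {n b : ℕ} (hn : 2 ≤ n) (hb : 1 ≤ b) (hbn : b ≤ n) :
    samplingFactor n b / n = ((n - 2).choose (b - 1) : ℝ) / (b ^ 2 * n.choose b) := by
  have hid : ((n.choose b * b * (n - b) : ℕ) : ℝ) =
      ((n * (n - 1) * (n - 2).choose (b - 1) : ℕ) : ℝ) :=
    congrArg _ (Nat.choose_mul_mul_sub hb)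
  push_cast [Nat.cast_sub hbn, Nat.cast_sub (by omega : 1 ≤ n)] at hid
  have hC : (n.choose b : ℝ) ≠ 0 := Nat.cast_ne_zero.mpr (Nat.choose_pos hbn).ne'
  have hn1 : (n : ℝ) - 1 ≠ 0 := by
    have : (2 : ℝ) ≤ n := by exact_mod_cast hn
    linarith
  rw [samplingFactor, div_div, div_eq_div_iff (by positivity) (by positivity)]
  linear_combination (b : ℝ) * hid

section Sampling

open Finset

variable {ι : Type*} [Fintype ι] {E : Type*} [NormedAddCommGroup E] [InnerProductSpace ℝ E]

lemma sum_norm_sub_mean_sq_le (ξ : ι → E) :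
    ∑ i, ‖ξ i - (1 / (Fintype.card ι : ℝ)) • ∑ j, ξ j‖ ^ 2 ≤ ∑ i, ‖ξ i‖ ^ 2 := by
  rcases isEmpty_or_nonempty ι with hι | hι
  · simp
  set μ := (1 / (Fintype.card ι : ℝ)) • ∑ j, ξ j
  have hsum : ∑ j, ξ j = (Fintype.card ι : ℝ) • μ := by
    rw [smul_smul, mul_one_div_cancel (by positivity), one_smul]
  have hexpand : ∑ i, ‖ξ i - μ‖ ^ 2 = ∑ i, ‖ξ i‖ ^ 2 - Fintype.card ι * ‖μ‖ ^ 2 := by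
    simp_rw [norm_sub_sq_real, sum_add_distrib, sum_sub_distrib, ← mul_sum, ← sum_inner, hsum,
      real_inner_smul_left, real_inner_self_eq_norm_sq, sum_const, card_univ, nsmul_eq_mul]
    ring
  rw [hexpand]
  have : 0 ≤ (Fintype.card ι : ℝ) * ‖μ‖ ^ 2 := by positivity
  linarith

variable [DecidableEq ι]

lemma card_filter_mem_and_mem_powersetCard_add_choose {b : ℕ} (hb : 1 ≤ b) {i j : ι}
    (hij : i ≠ j) :
    #{S ∈ powersetCard b univ | i ∈ S ∧ j ∈ S} + (Fintype.card ι - 2).choose (b - 1) =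
      #{S ∈ powersetCard b univ | i ∈ S} := by
  have hsplit := card_filter_add_card_filter_not
    (s := {S ∈ powersetCard b (univ : Finset ι) | i ∈ S}) (fun S => j ∈ S)
  have hnot : {S ∈ powersetCard b (univ : Finset ι) | i ∈ S ∧ j ∉ S} =
      {S ∈ powersetCard b (univ.erase j) | {i} ⊆ S} := by
    ext S
    simp only [mem_filter, mem_powersetCard, subset_univ, true_and, subset_erase,
      singleton_subset_iff]
    tauto
  rw [filter_filter, filter_filter, hnot, card_filter_powersetCard_subset _ _ _
    (by simpa using hij) (by simpa using hb)] at hsplit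
  rw [← hsplit, card_erase_of_mem (mem_univ j), card_univ, card_singleton, Nat.sub_sub]

lemma sum_norm_sum_sq_eq_sum_card_mul_inner (P : Finset (Finset ι)) (η : ι → E) :
    ∑ S ∈ P, ‖∑ i ∈ S, η i‖ ^ 2 =
      ∑ i, ∑ j, (#{S ∈ P | i ∈ S ∧ j ∈ S} : ℝ) * ⟪η i, η j⟫ := by
  have hS : ∀ S : Finset ι, ‖∑ i ∈ S, η i‖ ^ 2 =
      ∑ i, ∑ j, if i ∈ S ∧ j ∈ S then ⟪η i, η j⟫ else 0 := by
    intro S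
    simp_rw [← real_inner_self_eq_norm_sq, sum_inner, inner_sum, ite_and, ← sum_ite_mem_eq S]
    congr! 2 with i
    split_ifs <;> simp
  simp_rw [hS]
  rw [sum_comm]
  refine sum_congr rfl fun i _ => ?_
  rw [sum_comm]
  refine sum_congr rfl fun j _ => ?_
  rw [← sum_filter, sum_const, nsmul_eq_mul]

theorem sum_powersetCard_norm_sum_sq_of_sum_eq_zero {b : ℕ} (hb : 1 ≤ b) {η : ι → E}
    (hη : ∑ i, η i = 0) :
    ∑ S ∈ powersetCard b univ, ‖∑ i ∈ S, η i‖ ^ 2 =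
      ((Fintype.card ι - 2).choose (b - 1) : ℝ) * ∑ i, ‖η i‖ ^ 2 := by
  set c : ℝ := ↑((Fintype.card ι - 2).choose (b - 1))
  rw [sum_norm_sum_sq_eq_sum_card_mul_inner, mul_sum]
  refine sum_congr rfl fun i _ => ?_
  -- A `b`-subset through `i` misses `j ≠ i` exactly when it is one of the `c` subsets of
  -- `univ.erase j` through `i`; so the pair counts are constant off the diagonal and `∑ η = 0`
  -- leaves only the diagonal.
  have hcount : ∀ j, (#{S ∈ powersetCard b univ | i ∈ S ∧ j ∈ S} : ℝ) =
      (#{S ∈ powersetCard b univ | i ∈ S} - c) + if j = i then c else 0 := by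
    intro j
    split_ifs with hji
    · simp [hji]
    · rw [← card_filter_mem_and_mem_powersetCard_add_choose hb (Ne.symm hji)]
      push_cast
      ring
  simp_rw [hcount, add_mul, sum_add_distrib, ← mul_sum, ← inner_sum, hη, inner_zero_right,
    ite_mul, zero_mul, sum_ite_eq', mem_univ, if_true, real_inner_self_eq_norm_sq]
  ring

theorem sum_powersetCard_norm_smul_sum_sub_mean_sq_le {b : ℕ} (hn : 2 ≤ Fintype.card ι)
    (hb : 1 ≤ b) (hbn : b ≤ Fintype.card ι) (ξ : ι → E) :
    (1 / ((Fintype.card ι).choose b : ℝ)) * ∑ S ∈ powersetCard b univ,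
        ‖(1 / (b : ℝ)) • ∑ i ∈ S, ξ i - (1 / (Fintype.card ι : ℝ)) • ∑ i, ξ i‖ ^ 2 ≤
      samplingFactor (Fintype.card ι) b * ((1 / (Fintype.card ι : ℝ)) * ∑ i, ‖ξ i‖ ^ 2) := by
  set n := Fintype.card ι
  set μ := (1 / (n : ℝ)) • ∑ i, ξ i
  have hn0 : (n : ℝ) ≠ 0 := by positivity
  have hb0 : (b : ℝ) ≠ 0 := by positivity
  have hcentered : ∑ i, (ξ i - μ) = 0 := by
    rw [sum_sub_distrib, sum_const, card_univ, ← Nat.cast_smul_eq_nsmul ℝ, smul_smul,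
      mul_one_div_cancel hn0, one_smul, sub_self]
  have hsample : ∀ S ∈ powersetCard b univ,
      ‖(1 / (b : ℝ)) • ∑ i ∈ S, ξ i - μ‖ ^ 2 = (1 / (b : ℝ)) ^ 2 * ‖∑ i ∈ S, (ξ i - μ)‖ ^ 2 := by
    intro S hS
    have hmean : (1 / (b : ℝ)) • ∑ i ∈ S, (ξ i - μ) = (1 / (b : ℝ)) • ∑ i ∈ S, ξ i - μ := by
      rw [sum_sub_distrib, sum_const, (mem_powersetCard.mp hS).2, ← Nat.cast_smul_eq_nsmul ℝ,
        smul_sub, smul_smul, one_div_mul_cancel hb0, one_smul]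
    rw [← hmean, norm_smul, mul_pow, Real.norm_of_nonneg (by positivity)]
  calc (1 / (n.choose b : ℝ)) * ∑ S ∈ powersetCard b univ, ‖(1 / (b : ℝ)) • ∑ i ∈ S, ξ i - μ‖ ^ 2
      = ((n - 2).choose (b - 1) : ℝ) / (b ^ 2 * n.choose b) * ∑ i, ‖ξ i - μ‖ ^ 2 := by
        rw [sum_congr rfl hsample, ← mul_sum,
          sum_powersetCard_norm_sum_sq_of_sum_eq_zero hb hcentered]
        ring
    _ ≤ samplingFactor n b * ((1 / (n : ℝ)) * ∑ i, ‖ξ i‖ ^ 2) := by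
        rw [← samplingFactor_div_eq hn hb hbn, div_eq_mul_one_div, mul_assoc]
        exact mul_le_mul_of_nonneg_left
          (mul_le_mul_of_nonneg_left (sum_norm_sub_mean_sq_le ξ) (by positivity))
          (samplingFactor_nonneg hb hbn)

end Sampling

section Smooth

open AffineMap Set

variable {E : Type*} [NormedAddCommGroup E] [InnerProductSpace ℝ E] [CompleteSpace E]
  {f : E → ℝ}

lemma HasGradientAt.hasDerivAt_comp_lineMap {g x z : E} {t : ℝ}
    (hf : HasGradientAt f g (lineMap x z t)) :
    HasDerivAt (fun s : ℝ => f (lineMap x z s)) ⟪g, z - x⟫ t :=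
  hf.hasFDerivAt.comp_hasDerivAt t hasDerivAt_lineMap

lemma ConvexOn.add_inner_le_of_hasGradientAt (hf : ConvexOn ℝ univ f) {g x : E}
    (hg : HasGradientAt f g x) (z : E) : f x + ⟪g, z - x⟫ ≤ f z := by
  have hline := hf.comp_affineMap (lineMap (k := ℝ) x z)
  rw [preimage_univ] at hline
  have := hline.le_slope_of_hasDerivAt (mem_univ 0) (mem_univ 1) zero_lt_one
    (HasGradientAt.hasDerivAt_comp_lineMap (by simpa using hg))
  simp only [slope_def_field, Function.comp_apply, lineMap_apply_zero, lineMap_apply_one,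
    sub_zero, div_one] at this
  linarith

lemma le_add_inner_add_of_lipschitz_gradient {g : E → E} (hg : ∀ x, HasGradientAt f (g x) x)
    {L : ℝ} (hlip : ∀ u v, ‖g u - g v‖ ≤ L * ‖u - v‖) (w z : E) :
    f z ≤ f w + ⟪g w, z - w⟫ + L / 2 * ‖z - w‖ ^ 2 := by
  set ψ : ℝ → ℝ := fun t => f (lineMap w z t) - t * ⟪g w, z - w⟫ - L / 2 * t ^ 2 * ‖z - w‖ ^ 2
  have hψ : ∀ t, HasDerivAt ψ (⟪g (lineMap w z t) - g w, z - w⟫ - L * t * ‖z - w‖ ^ 2) t := by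
    intro t
    have hline : HasDerivAt (fun s : ℝ => f (lineMap w z s)) ⟪g (lineMap w z t), z - w⟫ t :=
      (hg _).hasDerivAt_comp_lineMap
    have hlin : HasDerivAt (fun s : ℝ => s * ⟪g w, z - w⟫) ⟪g w, z - w⟫ t := by
      simpa using (hasDerivAt_id t).mul_const ⟪g w, z - w⟫
    have hquad : HasDerivAt (fun s : ℝ => L / 2 * s ^ 2 * ‖z - w‖ ^ 2) (L * t * ‖z - w‖ ^ 2) t :=
      (((hasDerivAt_pow 2 t).const_mul (L / 2)).mul_const _).congr_deriv (by ring)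
    rw [inner_sub_left]
    exact (hline.sub hlin).sub hquad
  have hψ' : ∀ t ∈ interior (Icc (0 : ℝ) 1),
      ⟪g (lineMap w z t) - g w, z - w⟫ - L * t * ‖z - w‖ ^ 2 ≤ 0 := by
    intro t ht
    rw [interior_Icc] at ht
    rw [sub_nonpos]
    calc ⟪g (lineMap w z t) - g w, z - w⟫
        ≤ ‖g (lineMap w z t) - g w‖ * ‖z - w‖ := real_inner_le_norm _ _
      _ ≤ L * ‖lineMap w z t - w‖ * ‖z - w‖ := by gcongr; exact hlip _ _
      _ = L * t * ‖z - w‖ ^ 2 := by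
        rw [← vsub_eq_sub, lineMap_vsub_left, vsub_eq_sub, norm_smul,
          Real.norm_of_nonneg ht.1.le]
        ring
  have hanti : AntitoneOn ψ (Icc 0 1) :=
    antitoneOn_of_hasDerivWithinAt_nonpos (convex_Icc 0 1)
      (fun t _ => (hψ t).continuousAt.continuousWithinAt) (fun t _ => (hψ t).hasDerivWithinAt) hψ'
  have := hanti (left_mem_Icc.2 zero_le_one) (right_mem_Icc.2 zero_le_one) zero_le_one
  simp only [ψ, lineMap_apply_zero, lineMap_apply_one] at this
  linarith

theorem ConvexOn.sq_norm_sub_gradient_le {g : E → E} (hf : ConvexOn ℝ univ f)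
    (hg : ∀ x, HasGradientAt f (g x) x) {L : ℝ} (hL : 0 < L)
    (hlip : ∀ u v, ‖g u - g v‖ ≤ L * ‖u - v‖) (w z : E) :
    ‖g z - g w‖ ^ 2 ≤ 2 * L * (f z - f w - ⟪g w, z - w⟫) := by
  -- `h` is minimal at `w` (subgradient inequality), and by the descent lemma the gradient step
  -- `z'` from `z` lowers `h` by at least `‖∇h z‖² / (2L)`.
  set h : E → ℝ := fun v => f v - ⟪g w, v⟫
  have hgh : ∀ v, HasGradientAt h (g v - g w) v := by
    intro v
    rw [hasGradientAt_iff_hasFDerivAt, map_sub]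
    exact (hg v).hasFDerivAt.sub (InnerProductSpace.toDual ℝ E (g w)).hasFDerivAt
  set z' := z - (1 / L) • (g z - g w)
  have hmin : h w ≤ h z' := by
    have := hf.add_inner_le_of_hasGradientAt (hg w) z'
    simp only [h, inner_sub_right] at this ⊢
    linarith
  have hdesc := le_add_inner_add_of_lipschitz_gradient hgh (L := L)
    (by simpa only [sub_sub_sub_cancel_right] using hlip) z z'
  simp only [z', sub_sub_cancel_left, inner_neg_right, inner_smul_right, norm_neg, norm_smul,
    real_inner_self_eq_norm_sq, Real.norm_of_nonneg (one_div_pos.2 hL).le] at hdesc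
  have hgap : h z - h w = f z - f w - ⟪g w, z - w⟫ := by
    simp only [h, inner_sub_right]
    ring
  have hstep : ‖g z - g w‖ ^ 2 / (2 * L) ≤ h z - h w := by
    have : L / 2 * (1 / L * ‖g z - g w‖) ^ 2 - 1 / L * ‖g z - g w‖ ^ 2
        = -(‖g z - g w‖ ^ 2 / (2 * L)) := by
      field_simp
      ring
    linarith
  rw [← hgap]
  exact (div_le_iff₀' (by positivity)).1 hstep

theorem IsMinOn.inner_gradient_sub_nonneg {F : E → ℝ} {W : Set E} {a w g : E}
    (hmin : IsMinOn F W a) (hF : HasGradientAt F g a) (hW : Convex ℝ W) (ha : a ∈ W)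
    (hw : w ∈ W) : 0 ≤ ⟪g, w - a⟫ :=
  hmin.localize.hasFDerivWithinAt_nonneg hF.hasFDerivAt.hasFDerivWithinAt
    (sub_mem_posTangentConeAt_of_segment_subset (hW.segment_subset ha hw))

theorem mean_sq_norm_sub_gradient_le {ι : Type*} [Fintype ι] {f : ι → E → ℝ} {g : ι → E → E}
    {F : E → ℝ} (hf : ∀ i, ConvexOn ℝ univ (f i)) (hg : ∀ i x, HasGradientAt (f i) (g i x) x)
    {L : ℝ} (hL : 0 < L) (hlip : ∀ i u v, ‖g i u - g i v‖ ≤ L * ‖u - v‖)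
    (hF : ∀ x, F x = (1 / (Fintype.card ι : ℝ)) * ∑ i, f i x) {W : Set E} (hW : Convex ℝ W)
    {a : E} (ha : a ∈ W) (hmin : IsMinOn F W a) {w : E} (hw : w ∈ W) :
    (1 / (Fintype.card ι : ℝ)) * ∑ i, ‖g i w - g i a‖ ^ 2 ≤ 2 * L * (F w - F a) := by
  set c := 1 / (Fintype.card ι : ℝ)
  have hFgrad : HasGradientAt F (c • ∑ i, g i a) a := by
    rw [funext hF, hasGradientAt_iff_hasFDerivAt, map_smul, map_sum]
    exact (HasFDerivAt.fun_sum fun i _ => (hg i a).hasFDerivAt).const_mul c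
  have hopt := hmin.inner_gradient_sub_nonneg hFgrad hW ha hw
  rw [real_inner_smul_left, sum_inner] at hopt
  calc c * ∑ i, ‖g i w - g i a‖ ^ 2
      ≤ c * ∑ i, 2 * L * (f i w - f i a - ⟪g i a, w - a⟫) := by
        gcongr with i
        exact (hf i).sq_norm_sub_gradient_le (hg i) hL (hlip i) a w
    _ = 2 * L * (F w - F a) - 2 * L * (c * ∑ i, ⟪g i a, w - a⟫) := by
        simp only [hF, ← Finset.mul_sum, Finset.sum_sub_distrib]
        ring
    _ ≤ 2 * L * (F w - F a) := by nlinarith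

theorem mean_sq_norm_gradient_sub_le {ι : Type*} [Fintype ι] {f : ι → E → ℝ} {g : ι → E → E}
    {F : E → ℝ} (hf : ∀ i, ConvexOn ℝ univ (f i)) (hg : ∀ i x, HasGradientAt (f i) (g i x) x)
    {L : ℝ} (hL : 0 < L) (hlip : ∀ i u v, ‖g i u - g i v‖ ≤ L * ‖u - v‖)
    (hF : ∀ x, F x = (1 / (Fintype.card ι : ℝ)) * ∑ i, f i x) {W : Set E} (hW : Convex ℝ W)
    {a : E} (ha : a ∈ W) (hmin : IsMinOn F W a) {x y : E} (hx : x ∈ W) (hy : y ∈ W) :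
    (1 / (Fintype.card ι : ℝ)) * ∑ i, ‖g i y - g i x‖ ^ 2 ≤
      4 * L * ((F y - F a) + (F x - F a)) := by
  set c := 1 / (Fintype.card ι : ℝ)
  have hgy := mean_sq_norm_sub_gradient_le hf hg hL hlip hF hW ha hmin hy
  have hgx := mean_sq_norm_sub_gradient_le hf hg hL hlip hF hW ha hmin hx
  calc c * ∑ i, ‖g i y - g i x‖ ^ 2
      ≤ c * ∑ i, 2 * (‖g i y - g i a‖ ^ 2 + ‖g i x - g i a‖ ^ 2) := by
        gcongr with i
        simpa only [sub_sub_sub_cancel_right] using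
          norm_sub_sq_le_two_mul (g i y - g i a) (g i x - g i a)
    _ = 2 * (c * ∑ i, ‖g i y - g i a‖ ^ 2) + 2 * (c * ∑ i, ‖g i x - g i a‖ ^ 2) := by
        rw [← Finset.mul_sum, Finset.sum_add_distrib]
        ring
    _ ≤ 4 * L * ((F y - F a) + (F x - F a)) := by linarith

end Smooth

theorem stmt_11_general {d n : ℕ} (hn : 2 ≤ n)
    (f : Fin n → EuclideanSpace ℝ (Fin d) → ℝ)
    (f' : Fin n → EuclideanSpace ℝ (Fin d) → EuclideanSpace ℝ (Fin d))
    (hconv : ∀ i, ConvexOn ℝ Set.univ (f i))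
    (hgrad : ∀ i x, HasGradientAt (f i) (f' i x) x)
    (L : ℝ) (hL : 0 < L)
    (hlip : ∀ i x y, ‖f' i x - f' i y‖ ≤ L * ‖x - y‖)
    (F : EuclideanSpace ℝ (Fin d) → ℝ)
    (hF : ∀ x, F x = (1 / (n : ℝ)) * ∑ i, f i x)
    (W : Set (EuclideanSpace ℝ (Fin d))) (hconvW : Convex ℝ W)
    (xstar : EuclideanSpace ℝ (Fin d)) (hxstar : xstar ∈ W)
    (hmin : ∀ w ∈ W, F xstar ≤ F w)
    (y x : EuclideanSpace ℝ (Fin d)) (hy : y ∈ W) (hx : x ∈ W)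
    (b : ℕ) (hb1 : 1 ≤ b) (hbn : b ≤ n)
    (α : ℝ) (hα : α = ((n : ℝ) - b) / ((b : ℝ) * ((n : ℝ) - 1))) :
    (1 / (n.choose b : ℝ)) *
      ∑ S ∈ Finset.powersetCard b (Finset.univ : Finset (Fin n)),
        ‖((1 / (n : ℝ)) • ∑ i, f' i x
            + (1 / (b : ℝ)) • ∑ i ∈ S, (f' i y - f' i x))
          - (1 / (n : ℝ)) • ∑ i, f' i y‖ ^ 2
    ≤ α * (4 * L) * ((F y - F xstar) + (F x - F xstar)) := by
  set ξ : Fin n → EuclideanSpace ℝ (Fin d) := fun i => f' i y - f' i x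
  have hG : ∀ S : Finset (Fin n), (1 / (n : ℝ)) • ∑ i, f' i x + (1 / (b : ℝ)) • ∑ i ∈ S, ξ i
      - (1 / (n : ℝ)) • ∑ i, f' i y = (1 / (b : ℝ)) • ∑ i ∈ S, ξ i - (1 / (n : ℝ)) • ∑ i, ξ i := by
    intro S
    simp only [ξ, Finset.sum_sub_distrib, smul_sub]
    abel
  simp_rw [hG]
  calc _ ≤ samplingFactor n b * ((1 / (n : ℝ)) * ∑ i, ‖ξ i‖ ^ 2) := by
        simpa using sum_powersetCard_norm_smul_sum_sub_mean_sq_le (ι := Fin n) (by simpa using hn)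
          hb1 (by simpa using hbn) ξ
    _ ≤ samplingFactor n b * (4 * L * ((F y - F xstar) + (F x - F xstar))) := by
        refine mul_le_mul_of_nonneg_left ?_ (samplingFactor_nonneg hb1 hbn)
        simpa using mean_sq_norm_gradient_sub_le hconv hgrad hL hlip (by simpa using hF) hconvW
          hxstar (isMinOn_iff.2 hmin) hx hy
    _ = α * (4 * L) * ((F y - F xstar) + (F x - F xstar)) := by
        rw [hα, samplingFactor]
        ring

theorem stmt_11 {d n : ℕ} (hn : 2 ≤ n)
    (f : Fin n → EuclideanSpace ℝ (Fin d) → ℝ)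
    (f' : Fin n → EuclideanSpace ℝ (Fin d) → EuclideanSpace ℝ (Fin d))
    (hconv : ∀ i, ConvexOn ℝ Set.univ (f i))
    (hgrad : ∀ i x, HasGradientAt (f i) (f' i x) x)
    (L : ℝ) (hL : 0 < L)
    (hlip : ∀ i x y, ‖f' i x - f' i y‖ ≤ L * ‖x - y‖)
    (F : EuclideanSpace ℝ (Fin d) → ℝ)
    (hF : ∀ x, F x = (1 / (n : ℝ)) * ∑ i, f i x)
    (W : Set (EuclideanSpace ℝ (Fin d))) (hcl : IsClosed W) (hconvW : Convex ℝ W)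
    (xstar : EuclideanSpace ℝ (Fin d)) (hxstar : xstar ∈ W)
    (hmin : ∀ w ∈ W, F xstar ≤ F w)
    (y x : EuclideanSpace ℝ (Fin d)) (hy : y ∈ W) (hx : x ∈ W)
    (b : ℕ) (hb1 : 1 ≤ b) (hbn : b ≤ n)
    (α : ℝ) (hα : α = ((n : ℝ) - b) / ((b : ℝ) * ((n : ℝ) - 1))) :
    (1 / (n.choose b : ℝ)) *
      ∑ S ∈ Finset.powersetCard b (Finset.univ : Finset (Fin n)),
        ‖((1 / (n : ℝ)) • ∑ i, f' i x
            + (1 / (b : ℝ)) • ∑ i ∈ S, (f' i y - f' i x))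
          - (1 / (n : ℝ)) • ∑ i, f' i y‖ ^ 2
    ≤ α * (4 * L) * ((F y - F xstar) + (F x - F xstar)) :=
  stmt_11_general hn f f' hconv hgrad L hL hlip F hF W hconvW xstar hxstar hmin y x hy hx b hb1 hbn
    α hα
end

section
/- Let F : ℝ^d → ℝ be convex and differentiable with L-Lipschitz gradient, W closed convex, x* ∈ W, y ∈ W, G ∈ ℝ^d, h ∈ (0, 1/L]. Define y⁺ = proj_W(y − hG), d = (1/h)(y − y⁺), and Δ = G − ∇F(y). Then F(x*) ≥ F(y⁺) + (h/2)‖d‖² + dᵀ(x* − y) − Δᵀ(x* − y⁺). -/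
/-!
Three inequalities are added: the descent inequality `F y⁺ ≤ F y + ⟪∇F y, y⁺ - y⟫ + L/2 ‖y⁺ - y‖²`,
the supporting-hyperplane inequality of the convex `F` at `y`, evaluated at `x*`, and the
variational inequality `⟪(y - h G) - y⁺, x* - y⁺⟫ ≤ 0` characterising the projection. Writing
`y⁺ = y - h d`, the inner products cancel and what remains is `(h / 2) (h L - 1) ‖d‖² ≤ 0`.
-/

open RealInnerProductSpace Set

section Smooth

variable {E : Type*} [NormedAddCommGroup E] [InnerProductSpace ℝ E] {f : E → ℝ} {f' : E → E}

theorem ConvexOn.comp_add_smul (hf : ConvexOn ℝ univ f) (a v : E) :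
    ConvexOn ℝ univ (fun t : ℝ => f (a + t • v)) := by
  refine (hf.comp_affineMap (AffineMap.lineMap a (a + v))).congr fun t _ => ?_
  simp [AffineMap.lineMap_apply, add_comm]

variable [CompleteSpace E]

theorem HasGradientAt.hasDerivAt_comp_add_smul {g a v : E} {t : ℝ}
    (hg : HasGradientAt f g (a + t • v)) :
    HasDerivAt (fun s : ℝ => f (a + s • v)) ⟪g, v⟫ t := by
  have hline : HasDerivAt (fun s : ℝ => a + s • v) v t := by
    simpa using ((hasDerivAt_id t).smul_const v).const_add a
  have := hg.hasFDerivAt.comp_hasDerivAt t hline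
  simpa only [Function.comp_def, InnerProductSpace.toDual_apply_apply] using this

theorem ConvexOn.add_inner_gradient_le (hf : ConvexOn ℝ univ f) {g x : E}
    (hg : HasGradientAt f g x) (y : E) :
    f x + ⟪g, y - x⟫ ≤ f y := by
  have hder : HasDerivAt (fun t : ℝ => f (x + t • (y - x))) ⟪g, y - x⟫ 0 :=
    HasGradientAt.hasDerivAt_comp_add_smul (by simpa using hg)
  have := (hf.comp_add_smul x (y - x)).le_slope_of_hasDerivAt (mem_univ 0) (mem_univ 1)
    zero_lt_one hder
  simp only [slope_def_field, sub_zero, div_one, zero_smul, add_zero, one_smul,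
    add_sub_cancel] at this
  linarith

theorem le_add_inner_gradient_add_sq_of_lipschitz (hf : ∀ x, HasGradientAt f (f' x) x) {L : ℝ}
    (hlip : ∀ x y, ‖f' x - f' y‖ ≤ L * ‖x - y‖) (a b : E) :
    f b ≤ f a + ⟪f' a, b - a⟫ + L / 2 * ‖b - a‖ ^ 2 := by
  set v := b - a
  -- `φ` is the gap to the paraboloid along the segment; its derivative is `≤ 0` by Cauchy–Schwarz.
  let φ : ℝ → ℝ := fun t => f (a + t • v) - t * ⟪f' a, v⟫ - L / 2 * t ^ 2 * ‖v‖ ^ 2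
  have hφ : ∀ t, HasDerivAt φ (⟪f' (a + t • v) - f' a, v⟫ - L * t * ‖v‖ ^ 2) t := by
    intro t
    have := (((hf (a + t • v)).hasDerivAt_comp_add_smul).sub
      ((hasDerivAt_id t).mul_const ⟪f' a, v⟫)).sub
      (((hasDerivAt_pow 2 t).const_mul (L / 2)).mul_const (‖v‖ ^ 2))
    exact this.congr_deriv (by simp only [inner_sub_left, Nat.cast_ofNat]; ring)
  have hφ_nonpos : ∀ t ∈ interior (Icc (0 : ℝ) 1),
      ⟪f' (a + t • v) - f' a, v⟫ - L * t * ‖v‖ ^ 2 ≤ 0 := by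
    intro t ht
    rw [interior_Icc] at ht
    have hnorm : ‖f' (a + t • v) - f' a‖ ≤ L * (t * ‖v‖) := by
      simpa [norm_smul, abs_of_pos ht.1] using hlip (a + t • v) a
    have := mul_le_mul_of_nonneg_right hnorm (norm_nonneg v)
    nlinarith [real_inner_le_norm (f' (a + t • v) - f' a) v]
  have hanti : AntitoneOn φ (Icc 0 1) :=
    antitoneOn_of_hasDerivWithinAt_nonpos (convex_Icc 0 1)
      (fun t _ => (hφ t).continuousAt.continuousWithinAt)
      (fun t _ => (hφ t).hasDerivWithinAt) hφ_nonpos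
  have := hanti (left_mem_Icc.2 zero_le_one) (right_mem_Icc.2 zero_le_one) zero_le_one
  simp only [φ, v, one_smul, zero_smul, add_zero, add_sub_cancel] at this
  linarith

end Smooth

theorem real_inner_le_zero_of_isMinOn_norm_sub {E : Type*} [NormedAddCommGroup E]
    [InnerProductSpace ℝ E] {K : Set E} (hK : Convex ℝ K) {u v : E} (hv : v ∈ K)
    (hmin : IsMinOn (fun w => ‖w - u‖) K v) {w : E} (hw : w ∈ K) :
    ⟪u - v, w - v⟫ ≤ 0 := by
  have : Nonempty K := ⟨⟨v, hv⟩⟩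
  have hbdd : BddBelow (range fun w : K => ‖u - w‖) := ⟨0, by rintro _ ⟨w, rfl⟩; positivity⟩
  refine (norm_eq_iInf_iff_real_inner_le_zero hK hv).1 (le_antisymm ?_ ?_) w hw
  · exact le_ciInf fun w => by simpa only [norm_sub_rev] using isMinOn_iff.1 hmin w w.2
  · exact ciInf_le hbdd ⟨v, hv⟩

theorem stmt_13_general {d : ℕ} (F : EuclideanSpace ℝ (Fin d) → ℝ)
    (F' : EuclideanSpace ℝ (Fin d) → EuclideanSpace ℝ (Fin d))
    (hconv : ConvexOn ℝ Set.univ F)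
    (hgrad : ∀ x, HasGradientAt F (F' x) x)
    (L : ℝ)
    (hlip : ∀ x y, ‖F' x - F' y‖ ≤ L * ‖x - y‖)
    (W : Set (EuclideanSpace ℝ (Fin d)))
    (hconvW : Convex ℝ W)
    (P : EuclideanSpace ℝ (Fin d) → EuclideanSpace ℝ (Fin d))
    (hP : ∀ z, P z ∈ W ∧ ∀ w ∈ W, ‖P z - z‖ ≤ ‖w - z‖)
    (xstar y : EuclideanSpace ℝ (Fin d)) (hxstar : xstar ∈ W)
    (G : EuclideanSpace ℝ (Fin d))
    (h : ℝ) (hh0 : 0 < h) (hhL : h ≤ 1 / L)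
    (yplus dvec Δ : EuclideanSpace ℝ (Fin d))
    (hyplus : yplus = P (y - h • G))
    (hdvec : dvec = (1 / h) • (y - yplus))
    (hΔ : Δ = G - F' y) :
    F xstar ≥ F yplus + (h / 2) * ‖dvec‖ ^ 2 + ⟪dvec, xstar - y⟫
      - ⟪Δ, xstar - yplus⟫ := by
  have hhL' : h * L ≤ 1 := (le_div_iff₀ (one_div_pos.1 (hh0.trans_le hhL))).1 hhL
  have hdescent := le_add_inner_gradient_add_sq_of_lipschitz hgrad hlip y yplus
  have hsupport := hconv.add_inner_gradient_le (hgrad y) xstar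
  have hproj : ⟪(y - h • G) - yplus, xstar - yplus⟫ ≤ 0 := by
    subst hyplus
    exact real_inner_le_zero_of_isMinOn_norm_sub hconvW (hP _).1 (isMinOn_iff.2 (hP _).2) hxstar
  obtain rfl : yplus = y - h • dvec := by
    rw [hdvec, smul_smul, mul_one_div_cancel hh0.ne', one_smul, sub_sub_cancel]
  replace hproj : ⟪dvec - G, xstar - (y - h • dvec)⟫ ≤ 0 := by
    rw [show (y - h • G) - (y - h • dvec) = h • (dvec - G) by module,
      real_inner_smul_left] at hproj
    exact nonpos_of_mul_nonpos_right hproj hh0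
  have hcurv : L / 2 * ‖h • dvec‖ ^ 2 ≤ h / 2 * ‖dvec‖ ^ 2 := by
    rw [norm_smul, Real.norm_of_nonneg hh0.le]
    nlinarith [mul_le_mul_of_nonneg_left hhL' (mul_nonneg hh0.le (sq_nonneg ‖dvec‖))]
  subst hΔ
  simp only [sub_sub_cancel_left, norm_neg, inner_neg_right, real_inner_smul_right,
    sub_sub_eq_add_sub, inner_add_right, inner_sub_left, inner_sub_right,
    real_inner_self_eq_norm_sq]
    at hdescent hproj hsupport ⊢
  linarith

theorem stmt_13 {d : ℕ} (F : EuclideanSpace ℝ (Fin d) → ℝ)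
    (F' : EuclideanSpace ℝ (Fin d) → EuclideanSpace ℝ (Fin d))
    (hconv : ConvexOn ℝ Set.univ F)
    (hgrad : ∀ x, HasGradientAt F (F' x) x)
    (L : ℝ) (hL : 0 < L)
    (hlip : ∀ x y, ‖F' x - F' y‖ ≤ L * ‖x - y‖)
    (W : Set (EuclideanSpace ℝ (Fin d)))
    (hne : W.Nonempty) (hcl : IsClosed W) (hconvW : Convex ℝ W)
    (P : EuclideanSpace ℝ (Fin d) → EuclideanSpace ℝ (Fin d))
    (hP : ∀ z, P z ∈ W ∧ ∀ w ∈ W, ‖P z - z‖ ≤ ‖w - z‖)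
    (xstar y : EuclideanSpace ℝ (Fin d)) (hxstar : xstar ∈ W) (hy : y ∈ W)
    (G : EuclideanSpace ℝ (Fin d))
    (h : ℝ) (hh0 : 0 < h) (hhL : h ≤ 1 / L)
    (yplus dvec Δ : EuclideanSpace ℝ (Fin d))
    (hyplus : yplus = P (y - h • G))
    (hdvec : dvec = (1 / h) • (y - yplus))
    (hΔ : Δ = G - F' y) :
    F xstar ≥ F yplus + (h / 2) * ‖dvec‖ ^ 2 + ⟪dvec, xstar - y⟫
      - ⟪Δ, xstar - yplus⟫ :=
  stmt_13_general F F' hconv hgrad L hlip W hconvW P hP xstar y hxstar G h hh0 hhL yplus dvec Δ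
    hyplus hdvec hΔ
end
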